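/- On ℝ⁴ with coordinates (x₁,x₂,x₃,x₄), the metric g = (e^{-4x₂+4x₃} - 1)dx₁² + e^{-2x₂+2x₃}(dx₁dx₄ + dx₄dx₁) + dx₂² + dx₃² + 2x₄e^{-2x₂+2x₃}(dx₃dx₁ + dx₁dx₃) equals e*ᵀν₁,₃e* for the coframe e¹ = e^{-2x₂+2x₃}dx₁, e² = 2x₄e^{-2x₂+2x₃}dx₁ + dx₂, e³ = dx₃, e⁴ = ((1/2)e^{-2x₂+2x₃} - 2x₄²e^{-2x₂+2x₃} - (1/2)e^{2x₂-2x₃})dx₁ - 2x₄dx₂ + 2x₄dx₃ + dx₄, where ν₁,₃ = [[0,0,0,1],[0,1,0,0],[0,0,1,0],[1,0,0,0]]. -/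
import Mathlib


open Matrix

/-- The standard bilinear form ν₁,₃ of signature (1,3) in antidiagonal conventions. -/
noncomputable def nu13 : Matrix (Fin 4) (Fin 4) ℝ :=
  !![0, 0, 0, 1; 0, 1, 0, 0; 0, 0, 1, 0; 1, 0, 0, 0]

/-- The non-reductive Gödel-type metric. -/
noncomputable def nonredG (p : Fin 4 → ℝ) : Matrix (Fin 4) (Fin 4) ℝ :=
  !![Real.exp (-4 * p 1 + 4 * p 2) - 1, 0,
       2 * p 3 * Real.exp (-2 * p 1 + 2 * p 2), Real.exp (-2 * p 1 + 2 * p 2);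
     0, 1, 0, 0;
     2 * p 3 * Real.exp (-2 * p 1 + 2 * p 2), 0, 1, 0;
     Real.exp (-2 * p 1 + 2 * p 2), 0, 0, 0]

/-- The coframe e¹ = e^{-2x₂+2x₃}dx₁, e² = 2x₄e^{-2x₂+2x₃}dx₁ + dx₂, e³ = dx₃,
e⁴ = ((1/2)e^{-2x₂+2x₃} - 2x₄²e^{-2x₂+2x₃} - (1/2)e^{2x₂-2x₃})dx₁
     - 2x₄dx₂ + 2x₄dx₃ + dx₄ (rows). -/
noncomputable def coframeN (p : Fin 4 → ℝ) : Matrix (Fin 4) (Fin 4) ℝ :=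
  !![Real.exp (-2 * p 1 + 2 * p 2), 0, 0, 0;
     2 * p 3 * Real.exp (-2 * p 1 + 2 * p 2), 1, 0, 0;
     0, 0, 1, 0;
     (1/2) * Real.exp (-2 * p 1 + 2 * p 2)
       - 2 * (p 3) ^ 2 * Real.exp (-2 * p 1 + 2 * p 2)
       - (1/2) * Real.exp (2 * p 1 - 2 * p 2),
       -2 * p 3, 2 * p 3, 1]

/-- The non-reductive Gödel-type metric equals e*ᵀν₁,₃e* for the stated coframe. -/
theorem nonred_metric_from_coframe :
    ∀ p : Fin 4 → ℝ, nonredG p = (coframeN p)ᵀ * nu13 * coframeN p := by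
  intro p
  have hexp : Real.exp (-4 * p 1 + 4 * p 2) = Real.exp (-2 * p 1 + 2 * p 2) * Real.exp (-2 * p 1 + 2 * p 2) := by
    rw [← Real.exp_add]; ring_nf
  have hinv : Real.exp (-2 * p 1 + 2 * p 2) * Real.exp (2 * p 1 - 2 * p 2) = 1 := by
    rw [← Real.exp_add]; ring_nf; exact Real.exp_zero
  unfold nonredG coframeN nu13
  ext i j
  have hexp' : Real.exp (-(4 * p 1) + 4 * p 2) = Real.exp (-(2 * p 1) + 2 * p 2) * Real.exp (-(2 * p 1) + 2 * p 2) := by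
    rw [← Real.exp_add]; ring_nf
  have hinv' : Real.exp (-(2 * p 1) + 2 * p 2) * Real.exp (2 * p 1 - 2 * p 2) = 1 := by
    rw [← Real.exp_add]; ring_nf; exact Real.exp_zero
  have hmix : Real.exp (-(2 * p 1) + 2 * p 2) = Real.exp (-2 * p 1 + 2 * p 2) := by ring_nf
  fin_cases i <;> fin_cases j <;>
    simp [Matrix.mul_apply, Fin.sum_univ_succ, Matrix.transpose_apply, Matrix.vecHead, Matrix.vecTail]
  all_goals try ring1
  all_goals ring_nf
  all_goals ring_nf at hexp hinv
  all_goals linear_combination hexp + hinv
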